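/- Let T be a summable ball kernel and let ψ be an ultrametric wavelet with ball I = B(c, p^{γ_I}). Then for every x ∈ ℚ_p the integral ∫ T(sup(x, y)) (ψ(x) − ψ(y)) dμ(y) converges absolutely and equals λ_I · ψ(x), where λ_I = T(I) p^{γ_I} + Σ_{γ > γ_I} T(B(c, p^γ)) (p^γ − p^{γ−1}). -/

import Mathlib

/-!
For `x ∈ I` the integrand splits along `I` and its complement. On `I`, `T(sup(x, y)) = T(I)`
wherever `ψ x ≠ ψ y` (such `y` lie in another maximal subball), and `∫_I ψ = 0` leaves
`T(I) μ(I) ψ(x)`. Off `I`, `ψ y = 0` and `sup(x, y) = sup(c, y)`, so the integral is a sum over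
the spheres `|y - c| = p^γ`, `γ > γ_I`, of measure `p^γ - p^(γ-1)`; summability of `T` is exactly
integrability there. For `x ∉ I`, `ψ x = 0` and `sup(x, y) = sup(x, c)` for `y ∈ I`, so the
integral is a multiple of `∫ ψ = 0`. Ball measures come from splitting a ball of radius `p^γ`
into `p` translates of the ball of radius `p^(γ-1)`.
-/

open MeasureTheory

/-- The index (base-`p` logarithm of the radius) of the smallest ball of `ℚ_[p]`
containing the two points `x` and `y` (for `x ≠ y`): its radius is `‖x - y‖ = p ^ (-(x-y).valuation)`. -/
noncomputable def supIdx {p : ℕ} [Fact p.Prime] (x y : ℚ_[p]) : ℤ := -(x - y).valuation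

/-- The index of the smallest ball containing the three points `x`, `ξ`, `η`
(for pairwise distinct points): its radius is `max (‖x-ξ‖, ‖x-η‖, ‖ξ-η‖)`. -/
noncomputable def sup3Idx {p : ℕ} [Fact p.Prime] (x ξ η : ℚ_[p]) : ℤ :=
  max (supIdx x ξ) (max (supIdx x η) (supIdx ξ η))

/-- A ball kernel: a function on balls of `ℚ_[p]`, encoded as a function of a center and
an index (log_p of the radius), independent of the choice of center in the ball. -/
def IsBallKernel {p : ℕ} [Fact p.Prime] (F : ℚ_[p] → ℤ → ℂ) : Prop :=
  ∀ c c' : ℚ_[p], ∀ γ : ℤ, dist c c' ≤ (p : ℝ) ^ γ → F c γ = F c' γ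

/-- Summability of a ball kernel: for every ball `B(c, p^γ₀)`,
`Σ_{γ > γ₀} ‖F(B(c, p^γ))‖ (p^γ - p^(γ-1)) < ∞`. -/
def KernelSummable {p : ℕ} [Fact p.Prime] (F : ℚ_[p] → ℤ → ℂ) : Prop :=
  ∀ c : ℚ_[p], ∀ γ₀ : ℤ, Summable (fun n : ℕ =>
    ‖F c (γ₀ + 1 + n)‖ * ((p : ℝ) ^ (γ₀ + 1 + (n : ℤ)) - (p : ℝ) ^ (γ₀ + (n : ℤ))))

/-- An ultrametric wavelet with ball `B(c, p^γ)`: vanishes outside the ball, is constant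
on each of the `p` maximal subballs (balls of radius `p^(γ-1)`), has zero mean, and is
not identically zero. -/
def IsWavelet {p : ℕ} [Fact p.Prime] [MeasurableSpace ℚ_[p]] (μ : Measure ℚ_[p])
    (ψ : ℚ_[p] → ℂ) (c : ℚ_[p]) (γ : ℤ) : Prop :=
  (∀ x, (p : ℝ) ^ γ < dist x c → ψ x = 0) ∧
    (∀ x y, dist x y ≤ (p : ℝ) ^ (γ - 1) → ψ x = ψ y) ∧
    (∫ x, ψ x ∂μ) = 0 ∧ ψ ≠ 0

/-- The eigenvalue `λ_I = T(I) ν(I) + Σ_{J > I} T(J) (ν(J) - ν(J,I))` attached to the ball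
`I = B(c, p^γI)` and the ball kernel `T`. -/
noncomputable def lamBall {p : ℕ} [Fact p.Prime] (T : ℚ_[p] → ℤ → ℂ) (c : ℚ_[p]) (γI : ℤ) : ℂ :=
  T c γI * (((p : ℝ) ^ γI : ℝ) : ℂ) +
    ∑' n : ℕ, T c (γI + 1 + n) *
      (((p : ℝ) ^ (γI + 1 + (n : ℤ)) - (p : ℝ) ^ (γI + (n : ℤ)) : ℝ) : ℂ)

/-- The coefficient `Φ_{I,J}` for balls `J = B(c, p^γJ) ⊊ I = B(c, p^γI)`. -/
noncomputable def PhiIJ {p : ℕ} [Fact p.Prime] (F : ℚ_[p] → ℤ → ℂ) (c : ℚ_[p])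
    (γI γJ : ℤ) : ℂ :=
  (((p : ℝ) ^ (2 * (γI - 1)) : ℝ) : ℂ) * F c γI - (((p : ℝ) ^ (2 * γJ) : ℝ) : ℂ) * F c γJ -
    ∑ γ ∈ Finset.Ioo γJ γI, (((p : ℝ) ^ (2 * γ) - (p : ℝ) ^ (2 * γ - 2) : ℝ) : ℂ) * F c γ

/-- The (spatial) operator of the quadratic cascade equation:
`∫∫ F(sup(x,ξ,η)) f(ξ)(f(η) - f(x)) dμ(ξ) dμ(η) + ∫ G(sup(x,ξ))(f(x) - f(ξ)) dμ(ξ)`. -/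
noncomputable def cascadeOp {p : ℕ} [Fact p.Prime] [MeasurableSpace ℚ_[p]]
    (μ : Measure ℚ_[p]) (F G : ℚ_[p] → ℤ → ℂ) (f : ℚ_[p] → ℂ) (x : ℚ_[p]) : ℂ :=
  (∫ ξ, ∫ η, F x (sup3Idx x ξ η) * (f ξ * (f η - f x)) ∂μ ∂μ) +
    ∫ ξ, G x (supIdx x ξ) * (f x - f ξ) ∂μ

/-- `v` satisfies the quadratic cascade equation
`∂ₜ v(x,t) + ∫∫ F(sup(x,ξ,η)) v(ξ,t)(v(η,t) - v(x,t)) dμ(ξ) dμ(η)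
  + ∫ G(sup(x,ξ))(v(x,t) - v(ξ,t)) dμ(ξ) = 0` for all `x ∈ ℚ_p` and all `t > 0`. -/
def SatisfiesCascade {p : ℕ} [Fact p.Prime] [MeasurableSpace ℚ_[p]]
    (μ : Measure ℚ_[p]) (F G : ℚ_[p] → ℤ → ℂ) (v : ℚ_[p] → ℝ → ℂ) : Prop :=
  ∀ x : ℚ_[p], ∀ t : ℝ, 0 < t →
    HasDerivAt (fun s => v x s) (-(cascadeOp μ F G (fun y => v y t) x)) t

open Metric Padic

namespace Padic

variable {p : ℕ} [Fact p.Prime]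

lemma one_lt_prime_cast : (1 : ℝ) < p := Nat.one_lt_cast.2 (Fact.out : p.Prime).one_lt

lemma prime_cast_pos : (0 : ℝ) < p := zero_lt_one.trans one_lt_prime_cast

lemma zpow_prime_cast_pos (γ : ℤ) : (0 : ℝ) < (p : ℝ) ^ γ := zpow_pos prime_cast_pos γ

lemma dist_eq_zpow_supIdx {x y : ℚ_[p]} (h : x ≠ y) : dist x y = (p : ℝ) ^ supIdx x y := by
  rw [dist_eq_norm, norm_eq_zpow_neg_valuation (sub_ne_zero.2 h), supIdx]

lemma supIdx_eq_of_dist_eq {x y : ℚ_[p]} {γ : ℤ} (h : dist x y = (p : ℝ) ^ γ) :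
    supIdx x y = γ := by
  have hxy : x ≠ y := dist_pos.1 (h ▸ zpow_prime_cast_pos γ)
  rw [dist_eq_zpow_supIdx hxy] at h
  exact zpow_right_injective₀ prime_cast_pos one_lt_prime_cast.ne' h

lemma supIdx_eq_of_dist_eq_dist {x y x' y' : ℚ_[p]} (h : dist x y = dist x' y') (hne : x' ≠ y') :
    supIdx x y = supIdx x' y' :=
  supIdx_eq_of_dist_eq (h.trans (dist_eq_zpow_supIdx hne))

lemma supIdx_eq_of_mem_sphere {c y : ℚ_[p]} {γ : ℤ} (hy : y ∈ sphere c ((p : ℝ) ^ γ)) :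
    supIdx c y = γ :=
  supIdx_eq_of_dist_eq (by rw [dist_comm]; exact hy)

lemma dist_eq_zpow_of_lt_of_le {x y : ℚ_[p]} {γ : ℤ} (h₁ : (p : ℝ) ^ (γ - 1) < dist x y)
    (h₂ : dist x y ≤ (p : ℝ) ^ γ) : dist x y = (p : ℝ) ^ γ := by
  have hxy : x ≠ y := dist_pos.1 ((zpow_prime_cast_pos _).trans h₁)
  rw [dist_eq_zpow_supIdx hxy] at h₁ h₂ ⊢
  have := (zpow_lt_zpow_iff_right₀ one_lt_prime_cast).1 h₁
  have := (zpow_le_zpow_iff_right₀ one_lt_prime_cast).1 h₂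
  congr 1
  omega

lemma sphere_zpow_eq_diff (c : ℚ_[p]) (γ : ℤ) :
    sphere c ((p : ℝ) ^ γ) = closedBall c ((p : ℝ) ^ γ) \ closedBall c ((p : ℝ) ^ (γ - 1)) := by
  ext y
  simp only [mem_sphere, Set.mem_sdiff, mem_closedBall, not_le]
  refine ⟨fun h => ⟨h.le, h ▸ zpow_lt_zpow_right₀ one_lt_prime_cast (by omega)⟩,
    fun h => dist_eq_zpow_of_lt_of_le h.2 h.1⟩

lemma compl_closedBall_zpow_eq_iUnion_sphere (c : ℚ_[p]) (γ : ℤ) :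
    (closedBall c ((p : ℝ) ^ γ))ᶜ = ⋃ n : ℕ, sphere c ((p : ℝ) ^ (γ + 1 + n)) := by
  ext y
  simp only [Set.mem_compl_iff, mem_closedBall, not_le, Set.mem_iUnion, mem_sphere]
  constructor
  · intro h
    have hyc : y ≠ c := dist_pos.1 ((zpow_prime_cast_pos _).trans h)
    rw [dist_eq_zpow_supIdx hyc] at h ⊢
    have := (zpow_lt_zpow_iff_right₀ one_lt_prime_cast).1 h
    exact ⟨(supIdx y c - γ - 1).toNat, by congr 1; omega⟩
  · rintro ⟨n, hn⟩
    exact hn ▸ zpow_lt_zpow_right₀ one_lt_prime_cast (by omega)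

lemma closedBall_zpow_eq_biUnion (a : ℚ_[p]) (γ : ℤ) :
    closedBall a ((p : ℝ) ^ γ) =
      ⋃ i ∈ Finset.range p, closedBall (a + i * (p : ℚ_[p]) ^ (-γ)) ((p : ℝ) ^ (γ - 1)) := by
  have hp : (p : ℚ_[p]) ≠ 0 := Nat.cast_ne_zero.2 (Fact.out : p.Prime).ne_zero
  ext x
  simp only [Set.mem_iUnion, Finset.mem_range, mem_closedBall, dist_eq_norm, exists_prop]
  constructor
  · intro hx
    have hpγ : (0 : ℝ) < (p : ℝ) ^ γ := zpow_prime_cast_pos γ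
    set z := (x - a) * (p : ℚ_[p]) ^ γ
    have hz : ‖z‖ ≤ 1 := by
      rw [norm_mul, norm_p_zpow, zpow_neg, ← div_eq_mul_inv, div_le_one hpγ]
      exact hx
    set i := PadicInt.zmodRepr ⟨z, hz⟩
    have hzi : ‖z - i‖ ≤ (p : ℝ) ^ (-1 : ℤ) := by
      rw [← zero_sub, ← norm_lt_pow_iff_norm_le_pow_sub_one, zpow_zero]
      exact PadicInt.norm_sub_zmodRepr_lt_one _
    refine ⟨i, PadicInt.zmodRepr_lt_p _, ?_⟩
    have hxi : x - (a + i * (p : ℚ_[p]) ^ (-γ)) = (z - i) * (p : ℚ_[p]) ^ (-γ) := by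
      simp only [z, sub_mul, mul_assoc, ← zpow_add₀ hp, add_neg_cancel, zpow_zero, mul_one]
      ring
    rw [hxi, norm_mul, norm_p_zpow, neg_neg, sub_eq_neg_add γ,
      zpow_add₀ prime_cast_pos.ne']
    exact mul_le_mul_of_nonneg_right hzi hpγ.le
  · rintro ⟨i, -, hx⟩
    have hi : ‖(i : ℚ_[p]) * (p : ℚ_[p]) ^ (-γ)‖ ≤ (p : ℝ) ^ γ := by
      rw [norm_mul, norm_p_zpow, neg_neg]
      exact mul_le_of_le_one_left (zpow_prime_cast_pos γ).le
        (IsUltrametricDist.norm_natCast_le_one ℚ_[p] i)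
    calc ‖x - a‖ = ‖(x - (a + i * (p : ℚ_[p]) ^ (-γ))) + i * (p : ℚ_[p]) ^ (-γ)‖ := by ring_nf
      _ ≤ max ‖x - (a + i * (p : ℚ_[p]) ^ (-γ))‖ ‖(i : ℚ_[p]) * (p : ℚ_[p]) ^ (-γ)‖ :=
        IsUltrametricDist.norm_add_le_max _ _
      _ ≤ (p : ℝ) ^ γ :=
        max_le (hx.trans (zpow_le_zpow_right₀ one_lt_prime_cast.le (by omega))) hi

lemma pairwiseDisjoint_closedBall_digits (a : ℚ_[p]) (γ : ℤ) :
    (Finset.range p : Set ℕ).PairwiseDisjoint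
      fun i => closedBall (a + i * (p : ℚ_[p]) ^ (-γ)) ((p : ℝ) ^ (γ - 1)) := by
  intro i hi j hj hij
  have hndvd : ¬ (p : ℤ) ∣ (i - j : ℤ) := fun h => hij <| by
    simp only [Finset.coe_range, Set.mem_Iio] at hi hj
    have := Int.eq_zero_of_abs_lt_dvd h (abs_sub_lt_iff.2 ⟨by omega, by omega⟩)
    omega
  have hdist : (p : ℝ) ^ (γ - 1) <
      dist (a + i * (p : ℚ_[p]) ^ (-γ)) (a + j * (p : ℚ_[p]) ^ (-γ)) := by
    have hnorm : (p : ℝ) ^ (-1 : ℤ) < ‖((i - j : ℤ) : ℚ_[p])‖ := by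
      rwa [← not_le, ← zero_sub, ← norm_lt_pow_iff_norm_le_pow_sub_one, zpow_zero,
        norm_intCast_lt_one_iff]
    have hsub : a + i * (p : ℚ_[p]) ^ (-γ) - (a + j * (p : ℚ_[p]) ^ (-γ)) =
        ((i - j : ℤ) : ℚ_[p]) * (p : ℚ_[p]) ^ (-γ) := by
      push_cast
      ring
    rw [dist_eq_norm, hsub, norm_mul, norm_p_zpow, neg_neg, sub_eq_neg_add γ,
      zpow_add₀ prime_cast_pos.ne']
    exact mul_lt_mul_of_pos_right hnorm (zpow_prime_cast_pos γ)
  refine (IsUltrametricDist.closedBall_eq_or_disjoint _ _ _).resolve_left fun h => ?_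
  have := h ▸ mem_closedBall_self (zpow_prime_cast_pos (γ - 1)).le
  exact (mem_closedBall.1 this).not_gt hdist

variable [MeasurableSpace ℚ_[p]] [BorelSpace ℚ_[p]]
  (μ : Measure ℚ_[p]) [μ.IsAddHaarMeasure]

lemma measure_closedBall_zpow_eq_mul (γ : ℤ) :
    μ (closedBall 0 ((p : ℝ) ^ γ)) = p * μ (closedBall 0 ((p : ℝ) ^ (γ - 1))) := by
  rw [closedBall_zpow_eq_biUnion 0 γ, measure_biUnion_finset
    (pairwiseDisjoint_closedBall_digits 0 γ) fun _ _ => measurableSet_closedBall]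
  simp_rw [Measure.addHaar_closedBall_center μ]
  simp

lemma measure_closedBall_zpow (hμ : μ (closedBall 0 1) = 1) (a : ℚ_[p]) (γ : ℤ) :
    μ (closedBall a ((p : ℝ) ^ γ)) = ENNReal.ofReal ((p : ℝ) ^ γ) := by
  rw [Measure.addHaar_closedBall_center μ]
  have hmul (k : ℤ) : ENNReal.ofReal ((p : ℝ) ^ k) = p * ENNReal.ofReal ((p : ℝ) ^ (k - 1)) := by
    rw [← ENNReal.ofReal_natCast, ← ENNReal.ofReal_mul (Nat.cast_nonneg p), ← zpow_one_add₀
      prime_cast_pos.ne', add_sub_cancel]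
  induction γ using Int.induction_on with
  | zero => simpa using hμ
  | succ n ih => rw [measure_closedBall_zpow_eq_mul, hmul, add_sub_cancel_right, ih]
  | pred n ih =>
    rw [measure_closedBall_zpow_eq_mul, hmul] at ih
    exact (ENNReal.mul_right_inj (by simpa using (Fact.out : p.Prime).ne_zero)
      (ENNReal.natCast_ne_top p)).1 ih

lemma measure_sphere_zpow (hμ : μ (closedBall 0 1) = 1) (c : ℚ_[p]) (γ : ℤ) :
    μ (sphere c ((p : ℝ) ^ γ)) = ENNReal.ofReal ((p : ℝ) ^ γ - (p : ℝ) ^ (γ - 1)) := by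
  rw [sphere_zpow_eq_diff, measure_sdiff (closedBall_subset_closedBall
      (zpow_le_zpow_right₀ one_lt_prime_cast.le (by omega)))
    measurableSet_closedBall.nullMeasurableSet (measure_closedBall_lt_top.ne),
    measure_closedBall_zpow μ hμ, measure_closedBall_zpow μ hμ,
    ENNReal.ofReal_sub _ (zpow_prime_cast_pos _).le]

variable {μ} {E : Type*} [NormedAddCommGroup E]

lemma setIntegral_comp_supIdx_sphere [NormedSpace ℝ E] [CompleteSpace E]
    (hμ : μ (closedBall 0 1) = 1) (g : ℤ → E) (c : ℚ_[p]) (γ : ℤ) :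
    ∫ y in sphere c ((p : ℝ) ^ γ), g (supIdx c y) ∂μ =
      ((p : ℝ) ^ γ - (p : ℝ) ^ (γ - 1)) • g γ := by
  rw [setIntegral_congr_fun isClosed_sphere.measurableSet
      fun y hy => by rw [supIdx_eq_of_mem_sphere hy],
    setIntegral_const, measureReal_def, measure_sphere_zpow μ hμ, ENNReal.toReal_ofReal
      (sub_nonneg.2 (zpow_le_zpow_right₀ one_lt_prime_cast.le (by omega)))]

lemma integrableOn_comp_supIdx_sphere (hμ : μ (closedBall 0 1) = 1) (g : ℤ → E) (c : ℚ_[p])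
    (γ : ℤ) : IntegrableOn (fun y => g (supIdx c y)) (sphere c ((p : ℝ) ^ γ)) μ := by
  refine (integrableOn_const (C := g γ) ?_).congr_fun
    (fun y hy => by rw [supIdx_eq_of_mem_sphere hy]) isClosed_sphere.measurableSet
  rw [measure_sphere_zpow μ hμ]
  exact ENNReal.ofReal_ne_top

variable {g : ℤ → E} {γ : ℤ}

lemma integrableOn_comp_supIdx_compl_closedBall (hμ : μ (closedBall 0 1) = 1)
    (hg : Summable fun n : ℕ => ‖g (γ + 1 + n)‖ * ((p : ℝ) ^ (γ + 1 + n) - (p : ℝ) ^ (γ + n)))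
    (c : ℚ_[p]) : IntegrableOn (fun y => g (supIdx c y)) (closedBall c ((p : ℝ) ^ γ))ᶜ μ := by
  rw [compl_closedBall_zpow_eq_iUnion_sphere]
  refine integrableOn_iUnion_of_summable_integral_norm
    (fun n => integrableOn_comp_supIdx_sphere hμ g c _) (hg.congr fun n => ?_)
  rw [setIntegral_comp_supIdx_sphere hμ (fun k => ‖g k‖) c, smul_eq_mul, mul_comm,
    show γ + 1 + (n : ℤ) - 1 = γ + n by ring]

lemma setIntegral_comp_supIdx_compl_closedBall [NormedSpace ℝ E] [CompleteSpace E]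
    (hμ : μ (closedBall 0 1) = 1)
    (hg : Summable fun n : ℕ => ‖g (γ + 1 + n)‖ * ((p : ℝ) ^ (γ + 1 + n) - (p : ℝ) ^ (γ + n)))
    (c : ℚ_[p]) : ∫ y in (closedBall c ((p : ℝ) ^ γ))ᶜ, g (supIdx c y) ∂μ =
      ∑' n : ℕ, ((p : ℝ) ^ (γ + 1 + n) - (p : ℝ) ^ (γ + n)) • g (γ + 1 + n) := by
  have hint := integrableOn_comp_supIdx_compl_closedBall hμ hg c
  have hdisj : Pairwise fun n m : ℕ =>
      Disjoint (sphere c ((p : ℝ) ^ (γ + 1 + n))) (sphere c ((p : ℝ) ^ (γ + 1 + m))) :=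
    fun n m hnm => Set.disjoint_left.2 fun y hn hm => hnm <| by
      have := zpow_right_injective₀ prime_cast_pos
        one_lt_prime_cast.ne' ((mem_sphere.1 hn).symm.trans (mem_sphere.1 hm))
      omega
  rw [compl_closedBall_zpow_eq_iUnion_sphere] at hint ⊢
  rw [integral_iUnion (fun _ => isClosed_sphere.measurableSet) hdisj hint]
  congr 1 with n
  rw [setIntegral_comp_supIdx_sphere hμ, show γ + 1 + (n : ℤ) - 1 = γ + n by ring]

end Padic

namespace IsWavelet

variable {p : ℕ} [Fact p.Prime] [MeasurableSpace ℚ_[p]] {μ : Measure ℚ_[p]}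
  {ψ : ℚ_[p] → ℂ} {c : ℚ_[p]} {γ : ℤ} {x : ℚ_[p]}

lemma eq_zero_of_notMem (hψ : IsWavelet μ ψ c γ)
    (hx : x ∉ closedBall c ((p : ℝ) ^ γ)) : ψ x = 0 :=
  hψ.1 x (not_le.1 hx)

lemma continuous (hψ : IsWavelet μ ψ c γ) : Continuous ψ :=
  continuous_iff_continuousAt.2 fun x => continuousAt_const.congr <|
    Filter.eventually_of_mem (closedBall_mem_nhds x (zpow_prime_cast_pos (γ - 1)))
      fun y hy => hψ.2.1 x y (by rw [dist_comm]; exact hy)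

lemma integrable [OpensMeasurableSpace ℚ_[p]] [IsFiniteMeasureOnCompacts μ]
    (hψ : IsWavelet μ ψ c γ) : Integrable ψ μ :=
  hψ.continuous.integrable_of_hasCompactSupport <|
    HasCompactSupport.intro (isCompact_closedBall c _) fun _ hx => hψ.eq_zero_of_notMem hx

lemma kernel_mul_sub_eq_of_mem {T : ℚ_[p] → ℤ → ℂ} (hT : IsBallKernel T)
    (hψ : IsWavelet μ ψ c γ) (hx : x ∈ closedBall c ((p : ℝ) ^ γ)) :
    (fun y => T x (supIdx x y) * (ψ x - ψ y)) =
      (closedBall c ((p : ℝ) ^ γ)).indicator (fun y => T c γ * (ψ x - ψ y)) +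
      (closedBall c ((p : ℝ) ^ γ))ᶜ.indicator (fun y => T c (supIdx c y) * ψ x) := by
  ext y
  by_cases hy : y ∈ closedBall c ((p : ℝ) ^ γ)
  · simp only [Pi.add_apply, Set.indicator_of_mem hy,
      Set.indicator_of_notMem (Set.notMem_compl_iff.2 hy), add_zero]
    by_cases hxy : dist x y ≤ (p : ℝ) ^ (γ - 1)
    · rw [hψ.2.1 x y hxy, sub_self, mul_zero, mul_zero]
    have hdist : dist x y = (p : ℝ) ^ γ := dist_eq_zpow_of_lt_of_le (not_le.1 hxy)
      ((dist_triangle_max x c y).trans (max_le hx (by rw [dist_comm]; exact hy)))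
    rw [supIdx_eq_of_dist_eq hdist, hT x c γ hx]
  · have hcy : dist x c < dist c y := by
      rw [dist_comm c]
      exact (mem_closedBall.1 hx).trans_lt (not_le.1 hy)
    have hdist : dist x y = dist c y := by
      rw [IsUltrametricDist.dist_eq_max_of_dist_ne_dist x c y hcy.ne, max_eq_right hcy.le]
    have hne : c ≠ y := fun h => hy (h ▸ mem_closedBall_self (zpow_prime_cast_pos γ).le)
    simp only [Pi.add_apply, Set.indicator_of_notMem hy, Set.indicator_of_mem (Set.mem_compl hy),
      zero_add, hψ.eq_zero_of_notMem hy, sub_zero]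
    rw [supIdx_eq_of_dist_eq_dist hdist hne,
      hT x c _ (hcy.le.trans (dist_eq_zpow_supIdx hne).le)]

lemma kernel_mul_sub_eq_of_notMem {T : ℚ_[p] → ℤ → ℂ} (hψ : IsWavelet μ ψ c γ)
    (hx : x ∉ closedBall c ((p : ℝ) ^ γ)) :
    (fun y => T x (supIdx x y) * (ψ x - ψ y)) = fun y => -T x (supIdx x c) * ψ y := by
  ext y
  rw [hψ.eq_zero_of_notMem hx, zero_sub, mul_neg, neg_mul]
  by_cases hy : y ∈ closedBall c ((p : ℝ) ^ γ)
  · have hcy : dist c y < dist x c := by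
      rw [dist_comm]
      exact (mem_closedBall.1 hy).trans_lt (not_le.1 hx)
    have hdist : dist x y = dist x c := by
      rw [IsUltrametricDist.dist_eq_max_of_dist_ne_dist x c y hcy.ne', max_eq_left hcy.le]
    have hne : x ≠ c := fun h => hx (h ▸ mem_closedBall_self (zpow_prime_cast_pos γ).le)
    rw [supIdx_eq_of_dist_eq_dist hdist hne]
  · rw [hψ.eq_zero_of_notMem hy, mul_zero, mul_zero]

variable [BorelSpace ℚ_[p]] [μ.IsAddHaarMeasure]

lemma setIntegral_const_sub (hψ : IsWavelet μ ψ c γ) (hμ : μ (closedBall 0 1) = 1) (x : ℚ_[p]) :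
    ∫ y in closedBall c ((p : ℝ) ^ γ), (ψ x - ψ y) ∂μ = (((p : ℝ) ^ γ : ℝ) : ℂ) * ψ x := by
  have hvanish : ∫ y in closedBall c ((p : ℝ) ^ γ), ψ y ∂μ = 0 := by
    rw [setIntegral_eq_integral_of_forall_compl_eq_zero fun _ hy => hψ.eq_zero_of_notMem hy]
    exact hψ.2.2.1
  rw [integral_sub (integrableOn_const (μ := μ) (s := closedBall c _) (C := ψ x)
      measure_closedBall_lt_top.ne) hψ.integrable.integrableOn,
    hvanish, sub_zero, setIntegral_const, measureReal_def, measure_closedBall_zpow μ hμ,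
    ENNReal.toReal_ofReal (zpow_prime_cast_pos γ).le, Complex.real_smul]

end IsWavelet

/-- Wavelets are eigenfunctions of ultrametric pseudodifferential operators:
for a summable ball kernel `T` and a wavelet `ψ` with ball `I = B(c, p^γI)`, the integral
`∫ T(sup(x,y))(ψ(x) - ψ(y)) dμ(y)` converges absolutely and equals `λ_I ψ(x)` where
`λ_I = T(I) p^γI + Σ_{γ > γI} T(B(c,p^γ)) (p^γ - p^(γ-1))`. -/
theorem wavelet_eigenfunction {p : ℕ} [Fact p.Prime]
    [MeasurableSpace ℚ_[p]] [BorelSpace ℚ_[p]]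
    (μ : Measure ℚ_[p]) [μ.IsAddHaarMeasure] (hμ : μ (Metric.closedBall 0 1) = 1)
    (T : ℚ_[p] → ℤ → ℂ) (hT : IsBallKernel T) (hTs : KernelSummable T)
    (ψ : ℚ_[p] → ℂ) (c : ℚ_[p]) (γI : ℤ) (hψ : IsWavelet μ ψ c γI) :
    ∀ x : ℚ_[p],
      Integrable (fun y => T x (supIdx x y) * (ψ x - ψ y)) μ ∧
      (∫ y, T x (supIdx x y) * (ψ x - ψ y) ∂μ) = lamBall T c γI * ψ x := by
  intro x
  by_cases hx : x ∈ closedBall c ((p : ℝ) ^ γI)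
  · have hI : IntegrableOn (fun y => T c γI * (ψ x - ψ y)) (closedBall c ((p : ℝ) ^ γI)) μ :=
      ((integrableOn_const measure_closedBall_lt_top.ne).sub hψ.integrable.integrableOn).const_mul _
    have hIc : IntegrableOn (fun y => T c (supIdx c y) * ψ x) (closedBall c ((p : ℝ) ^ γI))ᶜ μ :=
      (integrableOn_comp_supIdx_compl_closedBall hμ (hTs c γI) c).mul_const (ψ x)
    have hIm : MeasurableSet (closedBall c ((p : ℝ) ^ γI)) := measurableSet_closedBall
    rw [hψ.kernel_mul_sub_eq_of_mem hT hx]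
    refine ⟨(hI.integrable_indicator hIm).add (hIc.integrable_indicator hIm.compl), ?_⟩
    rw [integral_add' (hI.integrable_indicator hIm) (hIc.integrable_indicator hIm.compl),
      integral_indicator hIm, integral_indicator hIm.compl, integral_const_mul, integral_mul_const,
      hψ.setIntegral_const_sub hμ, setIntegral_comp_supIdx_compl_closedBall hμ (hTs c γI),
      lamBall, add_mul, mul_assoc]
    simp_rw [Complex.real_smul, mul_comm (_ : ℂ) (T c _)]
  · rw [hψ.kernel_mul_sub_eq_of_notMem hx, integral_const_mul, hψ.2.2.1,
      hψ.eq_zero_of_notMem hx, mul_zero, mul_zero]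
    exact ⟨hψ.integrable.const_mul _, rfl⟩
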